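/- arXiv:0911.0216 — 5 statements merged into one kernel-verified Lean document; each statement's English description precedes it below -/
import Mathlib

section
/- Let M be a nonzero finite-dimensional complex vector space and let 𝒮 be a set of pairwise commuting ℂ-linear endomorphisms of M. Suppose that M cannot be written as a direct sum U ⊕ W of two nonzero subspaces each stable under every element of 𝒮. Then for every X ∈ 𝒮 there exists a unique λ ∈ ℂ such that X − λ·id is nilpotent (equivalently, each element of 𝒮 has exactly one eigenvalue, and the ℂ-subalgebra of End_ℂ M generated by 𝒮 is a local ring). -/
/-- if a nonzero finite-dimensional complex vector space `M` is
indecomposable under a set `𝒮` of pairwise commuting endomorphisms, then every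
element of `𝒮` has a unique `λ ∈ ℂ` such that `X - λ·id` is nilpotent. -/
theorem stmt_1 {M : Type} [AddCommGroup M] [Module ℂ M] [FiniteDimensional ℂ M]
    [Nontrivial M] (𝒮 : Set (Module.End ℂ M))
    (hcomm : ∀ X ∈ 𝒮, ∀ Y ∈ 𝒮, Commute X Y)
    (hind : ¬ ∃ U W : Submodule ℂ M, U ≠ ⊥ ∧ W ≠ ⊥ ∧ U ⊓ W = ⊥ ∧ U ⊔ W = ⊤ ∧
      (∀ X ∈ 𝒮, ∀ v ∈ U, X v ∈ U) ∧ (∀ X ∈ 𝒮, ∀ v ∈ W, X v ∈ W)) :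
    ∀ X ∈ 𝒮, ∃! lam : ℂ, IsNilpotent (X - lam • (1 : Module.End ℂ M)) := by
  intro X hX
  obtain ⟨μ, hμ⟩ := Module.End.exists_eigenvalue X
  have htop : X.maxGenEigenspace μ = ⊤ := by
    by_contra hne
    apply hind
    set U := X.maxGenEigenspace μ with hU
    set W := ⨆ ν ≠ μ, X.maxGenEigenspace ν with hW
    have hsup : U ⊔ W = ⊤ := by
      rw [eq_top_iff, ← X.iSup_maxGenEigenspace_eq_top]
      refine iSup_le fun ν => ?_
      rcases eq_or_ne ν μ with rfl | h
      · exact le_sup_left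
      · exact le_trans (le_iSup₂ (f := fun ν _ => X.maxGenEigenspace ν) ν h) le_sup_right
    refine ⟨U, W, ?_, ?_, ?_, hsup, ?_, ?_⟩
    · exact fun h => hμ (le_bot_iff.mp (h ▸ (X.genEigenspace μ).monotone le_top))
    · intro hWbot
      rw [hWbot, sup_bot_eq] at hsup
      exact hne hsup
    · exact disjoint_iff.mp (X.independent_maxGenEigenspace μ)
    · intro Y hY v hv
      exact Module.End.mapsTo_maxGenEigenspace_of_comm (hcomm X hX Y hY) μ hv
    · intro Y hY v hv
      have : W ≤ Submodule.comap Y W := by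
        refine iSup₂_le fun ν hν => ?_
        intro x hx
        exact Submodule.mem_comap.mpr <|
          le_trans (le_iSup₂ (f := fun ν _ => X.maxGenEigenspace ν) ν hν) le_rfl
            (Module.End.mapsTo_maxGenEigenspace_of_comm (hcomm X hX Y hY) ν hx)
      exact this hv
  refine ⟨μ, ?_, ?_⟩
  · rw [Module.End.maxGenEigenspace_eq_genEigenspace_finrank,
      Module.End.genEigenspace_nat, LinearMap.ker_eq_top] at htop
    exact ⟨Module.finrank ℂ M, htop⟩
  · intro lam hlam
    have hnil : IsNilpotent (X - μ • (1 : Module.End ℂ M)) := by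
      rw [Module.End.maxGenEigenspace_eq_genEigenspace_finrank,
        Module.End.genEigenspace_nat, LinearMap.ker_eq_top] at htop
      exact ⟨Module.finrank ℂ M, htop⟩
    have hc : Commute (X - lam • (1 : Module.End ℂ M)) (X - μ • (1 : Module.End ℂ M)) := by
      have h1 : ∀ a : ℂ, Commute (a • (1 : Module.End ℂ M)) X :=
        fun a => (Commute.one_left X).smul_left a
      exact Commute.sub_left ((Commute.refl X).sub_right (h1 μ).symm)
        ((h1 lam).sub_right (((Commute.refl (1 : Module.End ℂ M)).smul_left lam).smul_right μ))
    have hdiff : IsNilpotent ((μ - lam) • (1 : Module.End ℂ M)) := by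
      have := hc.isNilpotent_sub hlam hnil
      have heq : (X - lam • (1 : Module.End ℂ M)) - (X - μ • (1 : Module.End ℂ M))
          = (μ - lam) • (1 : Module.End ℂ M) := by
        rw [sub_smul]; abel
      rwa [heq] at this
    obtain ⟨n, hn⟩ := hdiff
    obtain ⟨v, hv⟩ := exists_ne (0 : M)
    have : ((μ - lam) ^ n) • v = 0 := by
      have := congrArg (fun f : Module.End ℂ M => f v) hn
      simpa [smul_pow] using this
    have hz : (μ - lam) ^ n = 0 := by
      by_contra hzz
      exact hv ((smul_eq_zero.mp this).resolve_left hzz)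
    exact (sub_eq_zero.mp (pow_eq_zero_iff'.mp hz).1).symm
end

section
/- Let F ∈ ℂ((x)) be a nonconstant formal Laurent series satisfying q(F)·dF/dx = p(F). Then ord F ∈ {−1, 0, 1}. Moreover: if ord F = 1, then p(0)·q(0) ≠ 0 and the coefficient of x in F equals p(0)/q(0); if ord F = 0 with constant coefficient α, then p(α)·q(α) ≠ 0 and the coefficient of x in F equals p(α)/q(α); if ord F = −1, then deg p = deg q + 2 and the coefficient of x^{−1} in F equals −(leading coefficient of q)/(leading coefficient of p). -/
noncomputable def lderiv {R : Type*} [Ring R] (S : LaurentSeries R) : LaurentSeries R :=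
  { coeff := fun i => (i + 1) • S.coeff (i + 1)
    isPWO_support' := by
      have h : Function.support (fun i : ℤ => (i + 1) • S.coeff (i + 1)) ⊆
          (fun i : ℤ => i - 1) '' S.support := by
        intro i hi
        have hne : S.coeff (i + 1) ≠ 0 := by
          intro h0
          apply hi
          simp [h0]
        exact ⟨i + 1, hne, by ring⟩
      exact (S.isPWO_support'.image_of_monotone
        (fun a b hab => by simpa using hab : Monotone (fun i : ℤ => i - 1))).mono h }

/-!
Compare the orders and leading coefficients of the two sides of `q(F) F' = p(F)`.

If `ord F = n < 0` with leading coefficient `c`, then `r(F) = (reverse r)(F⁻¹) F^(deg r)` has order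
`n deg r` and leading coefficient `lc(r) c^(deg r)`, and `F'` has order `n - 1` and leading
coefficient `n c`. Equal orders give `n (deg p - deg q - 1) = -1`, so `n = -1` and
`deg p = deg q + 2`; equal leading coefficients then give `c = -lc(q) / lc(p)`.

If `ord F ≥ 0`, write `F = α + G` with `ord G = m ≥ 1`. Then `r(F) - r(α)` has order at least `m`
and `F' = G'` has order `m - 1`. Coprimality excludes `p(α) = q(α) = 0`; `q(α) = 0` would make the
left side of order `≥ 2m - 1 > 0 = ord p(F)`, and `p(α) = 0` would make the right side of order
`≥ m > m - 1`. So `p(α) q(α) ≠ 0`, both `p(F)` and `q(F)` have order `0`, whence `m = 1` and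
`q(α) F₁ = p(α)`.
-/

open HahnSeries Polynomial

namespace HahnSeries

variable {Γ R : Type*}

section OrderedMonoid

variable [AddCommMonoid Γ] [LinearOrder Γ] [IsOrderedCancelAddMonoid Γ]

theorem zero_le_orderTop_C [NonAssocSemiring R] (r : R) : 0 ≤ (C r : R⟦Γ⟧).orderTop := by
  rw [C_apply]
  exact orderTop_single_le

theorem orderTop_pow [Semiring R] [NoZeroDivisors R] [Nontrivial R] (x : R⟦Γ⟧) (n : ℕ) :
    (x ^ n).orderTop = n • x.orderTop := by
  induction n with
  | zero => rw [pow_zero, orderTop_one, zero_nsmul]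
  | succ n ih => rw [pow_succ, orderTop_mul, ih, succ_nsmul]

theorem leadingCoeff_pow [Semiring R] [NoZeroDivisors R] (x : R⟦Γ⟧) (n : ℕ) :
    (x ^ n).leadingCoeff = x.leadingCoeff ^ n := by
  induction n with
  | zero => rw [pow_zero, leadingCoeff_one, pow_zero]
  | succ n ih => rw [pow_succ, leadingCoeff_mul, ih, pow_succ]

theorem zero_lt_orderTop_sub_C_coeff_zero [Ring R] {x : R⟦Γ⟧} (hx : 0 ≤ x.order) :
    0 < (x - C (x.coeff 0)).orderTop := by
  refine lt_of_le_of_ne (le_orderTop_iff_forall.mpr fun j hj => ?_)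
    (orderTop_ne_of_coeff_eq_zero ?_).symm
  · have hj : j < 0 := by exact_mod_cast hj
    rw [coeff_sub, coeff_eq_zero_of_lt_order (hj.trans_le hx), C_apply, coeff_single_of_ne hj.ne,
      sub_zero]
  · rw [coeff_sub, C_apply, coeff_single_same, sub_self]

variable [CommRing R]

theorem orderTop_sub_C_le_orderTop_eval₂_sub_C {x : R⟦Γ⟧} {a : R}
    (hx : 0 ≤ (x - C a).orderTop) (r : R[X]) :
    (x - C a).orderTop ≤ (r.eval₂ C x - C (r.eval a)).orderTop := by
  have hx₀ : 0 ≤ x.orderTop := by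
    simpa using (le_min hx (zero_le_orderTop_C a)).trans min_orderTop_le_orderTop_add
  induction r using Polynomial.induction_on with
  | C b => simp
  | add r s hr hs =>
    rw [eval₂_add, eval_add, map_add, add_sub_add_comm]
    exact (le_min hr hs).trans min_orderTop_le_orderTop_add
  | monomial k b ih =>
    have hsplit : (Polynomial.C b * X ^ (k + 1)).eval₂ C x -
          C ((Polynomial.C b * X ^ (k + 1)).eval a) =
        ((Polynomial.C b * X ^ k).eval₂ C x - C ((Polynomial.C b * X ^ k).eval a)) * x +
          C (b * a ^ k) * (x - C a) := by
      simp only [eval₂_mul, eval₂_C, eval₂_X_pow, eval_mul, eval_C, eval_pow, eval_X, map_mul,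
        map_pow]
      ring
    rw [hsplit]
    refine (le_min ?_ ?_).trans min_orderTop_le_orderTop_add
    · exact (ih.trans (le_add_of_nonneg_right hx₀)).trans orderTop_add_le_mul
    · exact (le_add_of_nonneg_left (zero_le_orderTop_C _)).trans orderTop_add_le_mul

theorem orderTop_eval₂_of_eval_ne_zero {x : R⟦Γ⟧} {a : R} (hx : 0 < (x - C a).orderTop)
    {r : R[X]} (hr : r.eval a ≠ 0) : (r.eval₂ C x).orderTop = 0 := by
  have hpos := hx.trans_le (orderTop_sub_C_le_orderTop_eval₂_sub_C hx.le r)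
  rw [← add_sub_cancel (C (r.eval a)) (r.eval₂ C x), orderTop_add_eq_left, C_apply,
    orderTop_single hr, WithTop.coe_zero]
  rwa [C_apply, orderTop_single hr]

theorem leadingCoeff_eval₂_of_eval_ne_zero {x : R⟦Γ⟧} {a : R} (hx : 0 < (x - C a).orderTop)
    {r : R[X]} (hr : r.eval a ≠ 0) : (r.eval₂ C x).leadingCoeff = r.eval a := by
  have hpos := hx.trans_le (orderTop_sub_C_le_orderTop_eval₂_sub_C hx.le r)
  rw [← add_sub_cancel (C (r.eval a)) (r.eval₂ C x), leadingCoeff_add_eq_left, C_apply,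
    leadingCoeff_of_single]
  rwa [C_apply, orderTop_single hr]

end OrderedMonoid

theorem leadingCoeff_eq_coeff_of_orderTop_eq [PartialOrder Γ] [Zero R] {x : R⟦Γ⟧} {g : Γ}
    (h : x.orderTop = g) : x.leadingCoeff = x.coeff g := by
  rw [← coeff_untop_eq_leadingCoeff (by simp [h])]
  simp [h]

section Field

variable [AddCommGroup Γ] [LinearOrder Γ] [IsOrderedAddMonoid Γ] {K : Type*} [Field K]

theorem order_inv (x : K⟦Γ⟧) : x⁻¹.order = -x.order := by
  rcases eq_or_ne x 0 with rfl | hx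
  · simp
  · have h := order_mul hx (inv_ne_zero hx)
    rw [mul_inv_cancel₀ hx, order_one] at h
    exact (neg_eq_of_add_eq_zero_right h.symm).symm

theorem eval₂_eq_eval₂_inv_reverse_mul_pow {x : K⟦Γ⟧} (hx : x ≠ 0) (r : K[X]) :
    r.eval₂ C x = r.reverse.eval₂ C x⁻¹ * x ^ r.natDegree := by
  let := invertibleOfNonzero hx
  rw [← invOf_eq_inv, eval₂_reverse_mul_pow]

theorem zero_lt_orderTop_inv {x : K⟦Γ⟧} (hx : x.order < 0) : 0 < x⁻¹.orderTop := by
  have hx0 : x ≠ 0 := by rintro rfl; simp at hx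
  rw [← order_eq_orderTop_of_ne_zero (inv_ne_zero hx0), order_inv]
  exact_mod_cast neg_pos.mpr hx

theorem orderTop_eval₂_of_order_neg {x : K⟦Γ⟧} (hx : x.order < 0) {r : K[X]} (hr : r ≠ 0) :
    (r.eval₂ C x).orderTop = r.natDegree • x.orderTop := by
  have hx0 : x ≠ 0 := by rintro rfl; simp at hx
  have hpos : 0 < (x⁻¹ - C 0).orderTop := by simpa using zero_lt_orderTop_inv hx
  have heval : r.reverse.eval 0 ≠ 0 := by
    rwa [← coeff_zero_eq_eval_zero, coeff_zero_reverse, Polynomial.leadingCoeff_ne_zero]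
  rw [eval₂_eq_eval₂_inv_reverse_mul_pow hx0, orderTop_mul,
    orderTop_eval₂_of_eval_ne_zero hpos heval, orderTop_pow, zero_add]

theorem leadingCoeff_eval₂_of_order_neg {x : K⟦Γ⟧} (hx : x.order < 0) {r : K[X]}
    (hr : r ≠ 0) :
    (r.eval₂ C x).leadingCoeff = r.leadingCoeff * x.leadingCoeff ^ r.natDegree := by
  have hx0 : x ≠ 0 := by rintro rfl; simp at hx
  have hpos : 0 < (x⁻¹ - C 0).orderTop := by simpa using zero_lt_orderTop_inv hx
  have heval : r.reverse.eval 0 ≠ 0 := by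
    rwa [← coeff_zero_eq_eval_zero, coeff_zero_reverse, Polynomial.leadingCoeff_ne_zero]
  rw [eval₂_eq_eval₂_inv_reverse_mul_pow hx0, leadingCoeff_mul,
    leadingCoeff_eval₂_of_eval_ne_zero hpos heval, leadingCoeff_pow, ← coeff_zero_eq_eval_zero,
    coeff_zero_reverse]

end Field

end HahnSeries

section lderiv

variable {R : Type*} [Ring R]

@[simp]
theorem coeff_lderiv (F : LaurentSeries R) (i : ℤ) :
    (lderiv F).coeff i = (i + 1) • F.coeff (i + 1) := rfl

theorem lderiv_sub_C (F : LaurentSeries R) (a : R) : lderiv (F - HahnSeries.C a) = lderiv F := by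
  ext i
  rw [coeff_lderiv, coeff_lderiv, HahnSeries.coeff_sub, C_apply, coeff_single, smul_sub]
  split_ifs with h
  · rw [h, zero_smul, zero_smul, sub_zero]
  · rw [smul_zero, sub_zero]

variable [IsAddTorsionFree R]

theorem orderTop_lderiv {F : LaurentSeries R} {n : ℤ} (hF : F.orderTop = n) (hn : n ≠ 0) :
    (lderiv F).orderTop = (n - 1 : ℤ) := by
  have hc : (lderiv F).coeff (n - 1) ≠ 0 := by
    rw [coeff_lderiv, sub_add_cancel]
    exact (IsAddTorsionFree.zsmul_eq_zero_iff_right hn).not.mpr (coeff_orderTop_ne hF)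
  refine le_antisymm (orderTop_le_of_coeff_ne_zero hc) (le_orderTop_iff_forall.mpr fun j hj => ?_)
  have hj' : ((j + 1 : ℤ) : WithTop ℤ) < F.orderTop := by
    have : j < n - 1 := by exact_mod_cast hj
    rw [hF]
    exact_mod_cast (by omega : j + 1 < n)
  rw [coeff_lderiv, coeff_eq_zero_of_lt_orderTop hj', smul_zero]

theorem leadingCoeff_lderiv {F : LaurentSeries R} {n : ℤ} (hF : F.orderTop = n) (hn : n ≠ 0) :
    (lderiv F).leadingCoeff = n • F.leadingCoeff := by
  rw [leadingCoeff_eq_coeff_of_orderTop_eq (orderTop_lderiv hF hn), coeff_lderiv, sub_add_cancel,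
    leadingCoeff_eq_coeff_of_orderTop_eq hF]

end lderiv

-- `LaurentSeries R` gets its `R`-algebra structure through power series, which is not reducibly
-- `HahnSeries.C`; this turns `aeval` into the `eval₂ C` form of the lemmas above.
theorem LaurentSeries.algebraMap_eq_C {R : Type*} [CommSemiring R] :
    algebraMap R (LaurentSeries R) = HahnSeries.C := by
  ext c
  simp only [algebraMap_apply', PowerSeries.algebraMap_eq, ofPowerSeries_C, C_apply]

section

variable {K : Type*} [Field K] [CharZero K] {p q : K[X]} {F : LaurentSeries K}

theorem order_eq_neg_one_of_order_neg (hp : p ≠ 0) (hq : q ≠ 0)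
    (hF : q.eval₂ HahnSeries.C F * lderiv F = p.eval₂ HahnSeries.C F) (hneg : F.order < 0) :
    F.order = -1 ∧ p.natDegree = q.natDegree + 2 ∧
      F.coeff (-1) = -q.leadingCoeff / p.leadingCoeff := by
  have hF0 : F ≠ 0 := by rintro rfl; simp at hneg
  have hFn : F.orderTop = F.order := (order_eq_orderTop_of_ne_zero hF0).symm
  have hc : F.leadingCoeff ≠ 0 := leadingCoeff_ne_zero.mpr hF0
  have hord := congrArg orderTop hF
  rw [orderTop_mul, orderTop_eval₂_of_order_neg hneg hq, orderTop_eval₂_of_order_neg hneg hp,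
    orderTop_lderiv hFn hneg.ne, hFn] at hord
  have hdeg : q.natDegree * F.order + (F.order - 1) = p.natDegree * F.order := by
    exact_mod_cast hord
  have hn : F.order = -1 := by
    have h : F.order * (p.natDegree - q.natDegree - 1 : ℤ) = -1 := by linear_combination -hdeg
    rcases Int.eq_one_or_neg_one_of_mul_eq_neg_one h with h1 | h1
    · omega
    · exact h1
  have hdeg' : p.natDegree = q.natDegree + 2 := by rw [hn] at hdeg; omega
  have hlc := congrArg HahnSeries.leadingCoeff hF
  rw [HahnSeries.leadingCoeff_mul, leadingCoeff_eval₂_of_order_neg hneg hq,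
    leadingCoeff_eval₂_of_order_neg hneg hp, leadingCoeff_lderiv hFn hneg.ne, hn, hdeg'] at hlc
  refine ⟨hn, hdeg', ?_⟩
  rw [← leadingCoeff_eq_coeff_of_orderTop_eq (hn ▸ hFn),
    eq_div_iff (Polynomial.leadingCoeff_ne_zero.mpr hp)]
  apply mul_right_cancel₀ (pow_ne_zero (q.natDegree + 1) hc)
  linear_combination (-1 : K) * hlc

theorem eval_ne_zero_of_orderTop_sub_C_eq (hpq : IsCoprime p q)
    (hF : q.eval₂ HahnSeries.C F * lderiv F = p.eval₂ HahnSeries.C F) {α : K} {m : ℤ}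
    (hm : 1 ≤ m) (hG : (F - HahnSeries.C α).orderTop = (m : WithTop ℤ)) :
    p.eval α ≠ 0 ∧ q.eval α ≠ 0 := by
  have hGpos : 0 < (F - HahnSeries.C α).orderTop := by rw [hG]; exact_mod_cast hm.trans_lt' one_pos
  have hbound :
      ∀ r : K[X], r.eval α = 0 → (m : WithTop ℤ) ≤ (r.eval₂ HahnSeries.C F).orderTop :=
    fun r hr => by
      have h := orderTop_sub_C_le_orderTop_eval₂_sub_C hGpos.le r
      rwa [hr, map_zero, sub_zero, hG] at h
  have hord := congrArg orderTop hF
  rw [orderTop_mul, ← lderiv_sub_C F α, orderTop_lderiv hG (by omega)] at hord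
  have hcop : ¬ (p.eval α = 0 ∧ q.eval α = 0) := fun ⟨hp0, hq0⟩ =>
    not_isCoprime_zero_zero (R := K) (by simpa [hp0, hq0] using hpq.map (evalRingHom α))
  have hq : q.eval α ≠ 0 := by
    intro hq0
    rw [orderTop_eval₂_of_eval_ne_zero hGpos fun hp0 => hcop ⟨hp0, hq0⟩] at hord
    have h := add_le_add (hbound q hq0) (le_refl ((m - 1 : ℤ) : WithTop ℤ))
    rw [hord] at h
    have : m + (m - 1) ≤ 0 := by exact_mod_cast h
    omega
  refine ⟨fun hp0 => ?_, hq⟩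
  rw [orderTop_eval₂_of_eval_ne_zero hGpos hq, zero_add] at hord
  have h := hbound p hp0
  rw [← hord] at h
  have : m ≤ m - 1 := by exact_mod_cast h
  omega

theorem orderTop_sub_C_eq_one (hF : q.eval₂ HahnSeries.C F * lderiv F = p.eval₂ HahnSeries.C F)
    {α : K} {m : ℤ} (hm : 1 ≤ m) (hG : (F - HahnSeries.C α).orderTop = (m : WithTop ℤ))
    (hp : p.eval α ≠ 0) (hq : q.eval α ≠ 0) :
    m = 1 ∧ q.eval α * (F - HahnSeries.C α).leadingCoeff = p.eval α := by
  have hGpos : 0 < (F - HahnSeries.C α).orderTop := by rw [hG]; exact_mod_cast hm.trans_lt' one_pos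
  have hord := congrArg orderTop hF
  rw [orderTop_mul, ← lderiv_sub_C F α, orderTop_lderiv hG (by omega),
    orderTop_eval₂_of_eval_ne_zero hGpos hq, orderTop_eval₂_of_eval_ne_zero hGpos hp,
    zero_add] at hord
  have hm1 : m = 1 := by
    have : m - 1 = 0 := by exact_mod_cast hord
    omega
  have hlc := congrArg HahnSeries.leadingCoeff hF
  rw [HahnSeries.leadingCoeff_mul, leadingCoeff_eval₂_of_eval_ne_zero hGpos hq,
    leadingCoeff_eval₂_of_eval_ne_zero hGpos hp, ← lderiv_sub_C F α,
    leadingCoeff_lderiv hG (by omega), hm1, one_smul] at hlc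
  exact ⟨hm1, hlc⟩

theorem coeff_one_eq_of_zero_le_order (hpq : IsCoprime p q)
    (hF : q.eval₂ HahnSeries.C F * lderiv F = p.eval₂ HahnSeries.C F) (hnn : 0 ≤ F.order)
    (hFnc : ¬ ∃ c : K, F = HahnSeries.C c) :
    p.eval (F.coeff 0) * q.eval (F.coeff 0) ≠ 0 ∧
      F.coeff 1 = p.eval (F.coeff 0) / q.eval (F.coeff 0) ∧
      (F - HahnSeries.C (F.coeff 0)).order = 1 := by
  set α := F.coeff 0
  set G := F - HahnSeries.C α
  have hG0 : G ≠ 0 := fun h => hFnc ⟨α, sub_eq_zero.mp h⟩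
  have hGm : G.orderTop = G.order := (order_eq_orderTop_of_ne_zero hG0).symm
  have hm : 1 ≤ G.order := by
    have := zero_lt_orderTop_sub_C_coeff_zero hnn
    rw [hGm] at this
    exact_mod_cast this
  obtain ⟨hp, hq⟩ := eval_ne_zero_of_orderTop_sub_C_eq hpq hF hm hGm
  obtain ⟨hm1, hlc⟩ := orderTop_sub_C_eq_one hF hm hGm hp hq
  have hF1 : F.coeff 1 = G.leadingCoeff := by
    rw [leadingCoeff_eq_coeff_of_orderTop_eq (hm1 ▸ hGm)]
    simp [G, C_apply]
  exact ⟨mul_ne_zero hp hq, by rw [hF1, eq_div_iff hq, ← hlc, mul_comm], hm1⟩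

end

/-- a nonconstant scalar Laurent series solution `F` of
`q(F)·dF/dx = p(F)` has order `-1`, `0` or `1`, and in each case the indicated
coefficient is determined by `p` and `q`. -/
theorem stmt_3 (p q : Polynomial ℂ) (hp : p ≠ 0) (hq : q ≠ 0) (hpq : IsCoprime p q)
    (F : LaurentSeries ℂ) (hFnc : ¬ ∃ c : ℂ, F = HahnSeries.C c)
    (hF : Polynomial.aeval F q * lderiv F = Polynomial.aeval F p) :
    (F.order = -1 ∨ F.order = 0 ∨ F.order = 1) ∧
    (F.order = 1 →
      Polynomial.eval 0 p * Polynomial.eval 0 q ≠ 0 ∧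
      F.coeff 1 = Polynomial.eval 0 p / Polynomial.eval 0 q) ∧
    (F.order = 0 →
      Polynomial.eval (F.coeff 0) p * Polynomial.eval (F.coeff 0) q ≠ 0 ∧
      F.coeff 1 = Polynomial.eval (F.coeff 0) p / Polynomial.eval (F.coeff 0) q) ∧
    (F.order = -1 →
      p.natDegree = q.natDegree + 2 ∧
      F.coeff (-1) = - q.leadingCoeff / p.leadingCoeff) := by
  rw [aeval_def, aeval_def, LaurentSeries.algebraMap_eq_C] at hF
  rcases lt_or_ge F.order 0 with hneg | hnn
  · obtain ⟨hord, hdeg, hcoeff⟩ := order_eq_neg_one_of_order_neg hp hq hF hneg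
    refine ⟨.inl hord, ?_, ?_, fun _ => ⟨hdeg, hcoeff⟩⟩ <;> intro h <;> omega
  · obtain ⟨hne, hcoeff, hG⟩ := coeff_one_eq_of_zero_le_order hpq hF hnn hFnc
    by_cases hα : F.coeff 0 = 0
    · have hord : F.order = 1 := by simpa [hα] using hG
      rw [hα] at hne hcoeff
      refine ⟨.inr (.inr hord), fun _ => ⟨hne, hcoeff⟩, ?_, ?_⟩ <;> intro h <;> omega
    · have hord : F.order = 0 := le_antisymm (order_le_of_coeff_ne_zero hα) hnn
      refine ⟨.inr (.inl hord), ?_, fun _ => ⟨hne, hcoeff⟩, ?_⟩ <;> intro h <;> omega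
end

section
/- Let n ≥ 1 and let N ∈ Mat_n(ℂ) be a matrix such that q(N) is invertible. Then: (a) any two formal power series S, T ∈ Mat_n(ℂ)[[x]] satisfying q(S)·dS/dx = p(S), q(T)·dT/dx = p(T), and having the same constant coefficient S_{(0)} = T_{(0)} = N are equal; (b) if S ∈ Mat_n(ℂ)[[x]] satisfies q(S)·dS/dx = p(S) with constant coefficient N, then every coefficient S_{(m)} of S is a polynomial in N with complex coefficients (in particular the coefficients of S commute pairwise). -/
/-!
Comparing coefficients of `x^m` in `q(S) · S' = p(S)` gives
  `q(N) · (m + 1) S₍ₘ₊₁₎ = [x^m] p(S) - ∑_{i + j = m, i ≠ 0} [x^i] q(S) · [x^j] S'`,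
and the right-hand side only involves `S₍₀₎, …, S₍ₘ₎`. Since `q(N)` is invertible this is a
recursion for the coefficients, which gives uniqueness. For any subalgebra `A`, the power series
whose coefficients of degree `≤ m` lie in `A` form a subalgebra, so `f(S)` inherits this property
from `S`; with `A = ℂ[N]`, which contains `q(N)⁻¹` because a subalgebra of a finite-dimensional
algebra is Artinian, the recursion keeps all coefficients in `ℂ[N]`.
-/

/-- The formal derivative of a power series (over a possibly noncommutative ring). -/
noncomputable def psderiv {R : Type*} [Ring R] (S : PowerSeries R) : PowerSeries R :=
  PowerSeries.mk fun m => (m + 1) • PowerSeries.coeff (m + 1) S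

open scoped Polynomial
open Polynomial (aeval aeval_X aeval_prod_apply aeval_mem_adjoin_singleton aeval_algHom_apply)
open Finset.HasAntidiagonal
open PowerSeries hiding aeval

theorem coeff_psderiv {R : Type*} [Ring R] (S : R⟦X⟧) (m : ℕ) :
    coeff m (psderiv S) = (m + 1) • coeff (m + 1) S :=
  coeff_mk _ _

theorem fst_le_and_snd_lt_of_mem_antidiagonal_erase {m : ℕ} {x : ℕ × ℕ}
    (hx : x ∈ (antidiagonal m).erase (0, m)) : x.1 ≤ m ∧ x.2 < m := by
  obtain ⟨hne, hx⟩ := Finset.mem_erase.1 hx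
  rw [mem_antidiagonal] at hx
  refine ⟨by omega, lt_of_le_of_ne (by omega) fun h => hne (Prod.ext ?_ h)⟩
  change x.1 = 0
  omega

theorem Subalgebra.ringInverse_mem {K R : Type*} [Field K] [Ring R] [Algebra K R]
    [FiniteDimensional K R] (A : Subalgebra K R) {x : R} (hx : x ∈ A) :
    Ring.inverse x ∈ A := by
  by_cases hu : IsUnit x
  · have : IsArtinianRing A := IsArtinianRing.of_finite K A
    obtain ⟨u, hu'⟩ : IsUnit (⟨x, hx⟩ : A) :=
      IsArtinianRing.isUnit_iff_isRightRegular.mpr fun a b hab =>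
        Subtype.ext (hu.mul_left_injective (congrArg Subtype.val hab))
    have hxu : x = (Units.map (A.val : A →* R) u : R) := by simp [hu']
    rw [hxu, Ring.inverse_unit, ← map_inv]
    exact (↑u⁻¹ : A).2
  · simp [Ring.inverse_non_unit x hu]

section CoeffLE

variable {K R : Type*} [CommRing K] [Ring R] [Algebra K R]

def PowerSeries.coeffLESubalgebra (A : Subalgebra K R) (m : ℕ) : Subalgebra K R⟦X⟧ where
  carrier := {S | ∀ k ≤ m, coeff k S ∈ A}
  mul_mem' {S T} hS hT k hk := by
    rw [coeff_mul]
    exact A.sum_mem fun x hx => A.mul_mem (hS _ ((antidiagonal.fst_le hx).trans hk))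
      (hT _ ((antidiagonal.snd_le hx).trans hk))
  add_mem' hS hT k hk := by
    rw [map_add]
    exact A.add_mem (hS k hk) (hT k hk)
  algebraMap_mem' c k _ := by
    rw [algebraMap_apply, coeff_C]
    split_ifs
    · exact A.algebraMap_mem c
    · exact A.zero_mem

def PowerSeries.coeffLEEqualizer (m : ℕ) : Subalgebra K (R⟦X⟧ × R⟦X⟧) where
  carrier := {x | ∀ k ≤ m, coeff k x.1 = coeff k x.2}
  mul_mem' {x y} hx hy k hk := by
    simp only [Prod.fst_mul, Prod.snd_mul, coeff_mul]
    exact Finset.sum_congr rfl fun i hi => by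
      rw [hx _ ((antidiagonal.fst_le hi).trans hk), hy _ ((antidiagonal.snd_le hi).trans hk)]
  add_mem' {x y} hx hy k hk := by
    simp only [Prod.fst_add, Prod.snd_add, map_add, hx k hk, hy k hk]
  algebraMap_mem' _ _ _ := rfl

theorem coeff_aeval_mem {A : Subalgebra K R} {m : ℕ} {S : R⟦X⟧}
    (hS : ∀ k ≤ m, coeff k S ∈ A) (f : K[X]) {k : ℕ} (hk : k ≤ m) :
    coeff k (aeval S f) ∈ A :=
  Algebra.adjoin_le (Set.singleton_subset_iff.2 (show S ∈ coeffLESubalgebra A m from hS))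
    (aeval_mem_adjoin_singleton K S (p := f)) k hk

theorem coeff_aeval_eq {m : ℕ} {S T : R⟦X⟧}
    (hST : ∀ k ≤ m, coeff k S = coeff k T) (f : K[X]) {k : ℕ} (hk : k ≤ m) :
    coeff k (aeval S f) = coeff k (aeval T f) := by
  have hf := Algebra.adjoin_le (Set.singleton_subset_iff.2
    (show (S, T) ∈ coeffLEEqualizer (K := K) m from hST))
    (aeval_mem_adjoin_singleton K (S, T) (p := f))
  rw [aeval_prod_apply] at hf
  exact hf k hk

theorem constantCoeff_aeval (S : R⟦X⟧) (f : K[X]) :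
    constantCoeff (aeval S f) = aeval (constantCoeff S) f :=
  (aeval_algHom_apply
    ({ constantCoeff with commutes' := fun _ => by simp [PowerSeries.algebraMap_apply] } :
      R⟦X⟧ →ₐ[K] R) S f).symm

end CoeffLE

section ODE

variable {K R : Type*} [Field K] [CharZero K] [Ring R] [Algebra K R] {p q : K[X]}

theorem coeff_succ_of_ode {S : R⟦X⟧} (hS : aeval S q * psderiv S = aeval S p)
    (hu : IsUnit (aeval (constantCoeff S) q)) (m : ℕ) :
    coeff (m + 1) S = ((m + 1 : ℕ) : K)⁻¹ • (Ring.inverse (aeval (constantCoeff S) q) *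
      (coeff m (aeval S p) - ∑ x ∈ (antidiagonal m).erase (0, m),
        coeff x.1 (aeval S q) * coeff x.2 (psderiv S))) := by
  have h : coeff m (aeval S q * psderiv S) = coeff m (aeval S p) := by rw [hS]
  have h0m : ((0, m) : ℕ × ℕ) ∈ antidiagonal m := mem_antidiagonal.2 (zero_add m)
  rw [coeff_mul, ← Finset.add_sum_erase _ _ h0m, coeff_zero_eq_constantCoeff_apply,
    constantCoeff_aeval, coeff_psderiv] at h
  rw [← h, add_sub_cancel_right, ← mul_assoc, Ring.inverse_mul_cancel _ hu, one_mul,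
    ← Nat.cast_smul_eq_nsmul K, smul_smul, inv_mul_cancel₀ (Nat.cast_ne_zero.2 m.succ_ne_zero),
    one_smul]

theorem eq_of_ode {S T : R⟦X⟧} (hS : aeval S q * psderiv S = aeval S p)
    (hT : aeval T q * psderiv T = aeval T p) (h0 : constantCoeff S = constantCoeff T)
    (hu : IsUnit (aeval (constantCoeff S) q)) : S = T := by
  ext m
  induction m using Nat.strong_induction_on with
  | _ m ih =>
  cases m with
  | zero => simpa using h0
  | succ m =>
    have hle : ∀ k ≤ m, coeff k S = coeff k T := fun k hk => ih k (by omega)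
    rw [coeff_succ_of_ode hS hu, coeff_succ_of_ode hT (h0 ▸ hu), h0, coeff_aeval_eq hle p le_rfl]
    congr 3
    refine Finset.sum_congr rfl fun x hx => ?_
    obtain ⟨h1, h2⟩ := fst_le_and_snd_lt_of_mem_antidiagonal_erase hx
    rw [coeff_aeval_eq hle q h1, coeff_psderiv, coeff_psderiv, hle _ h2]

theorem coeff_mem_of_ode (A : Subalgebra K R) {S : R⟦X⟧}
    (hS : aeval S q * psderiv S = aeval S p)
    (hu : IsUnit (aeval (constantCoeff S) q)) (h0 : constantCoeff S ∈ A)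
    (hinv : Ring.inverse (aeval (constantCoeff S) q) ∈ A) (m : ℕ) : coeff m S ∈ A := by
  induction m using Nat.strong_induction_on with
  | _ m ih =>
  cases m with
  | zero => simpa using h0
  | succ m =>
    have hle : ∀ k ≤ m, coeff k S ∈ A := fun k hk => ih k (by omega)
    rw [coeff_succ_of_ode hS hu]
    refine A.smul_mem (A.mul_mem hinv (A.sub_mem (coeff_aeval_mem hle p le_rfl)
      (A.sum_mem fun x hx => ?_))) _
    obtain ⟨h1, h2⟩ := fst_le_and_snd_lt_of_mem_antidiagonal_erase hx
    rw [coeff_psderiv]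
    exact A.mul_mem (coeff_aeval_mem hle q h1) (nsmul_mem (hle _ h2) _)

end ODE

theorem stmt_11_general (p q : Polynomial ℂ)
    (n : ℕ) (N : Matrix (Fin n) (Fin n) ℂ)
    (hN : IsUnit (Polynomial.aeval N q)) :
    (∀ S T : PowerSeries (Matrix (Fin n) (Fin n) ℂ),
      Polynomial.aeval S q * psderiv S = Polynomial.aeval S p →
      Polynomial.aeval T q * psderiv T = Polynomial.aeval T p →
      PowerSeries.constantCoeff S = N →
      PowerSeries.constantCoeff T = N →
      S = T) ∧
    (∀ S : PowerSeries (Matrix (Fin n) (Fin n) ℂ),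
      Polynomial.aeval S q * psderiv S = Polynomial.aeval S p →
      PowerSeries.constantCoeff S = N →
      ∀ m : ℕ, ∃ c : Polynomial ℂ,
        PowerSeries.coeff m S = Polynomial.aeval N c) := by
  refine ⟨fun S T hS hT hS0 hT0 => eq_of_ode hS hT (hS0.trans hT0.symm) (hS0 ▸ hN),
    fun S hS hS0 m => ?_⟩
  subst hS0
  obtain ⟨c, hc⟩ := coeff_mem_of_ode (aeval (constantCoeff S)).range hS hN ⟨.X, aeval_X _⟩
    ((aeval _).range.ringInverse_mem ⟨q, rfl⟩) m
  exact ⟨c, hc.symm⟩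

/-- (a) a matrix power series solution of `q(S)·dS/dx = p(S)` is
uniquely determined by its constant coefficient `N` (assuming `q(N)` invertible);
(b) all its coefficients are polynomials in `N`. -/
theorem stmt_11 (p q : Polynomial ℂ) (hp : p ≠ 0) (hq : q ≠ 0) (hpq : IsCoprime p q)
    (n : ℕ) (hn : 1 ≤ n) (N : Matrix (Fin n) (Fin n) ℂ)
    (hN : IsUnit (Polynomial.aeval N q)) :
    (∀ S T : PowerSeries (Matrix (Fin n) (Fin n) ℂ),
      Polynomial.aeval S q * psderiv S = Polynomial.aeval S p →
      Polynomial.aeval T q * psderiv T = Polynomial.aeval T p →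
      PowerSeries.constantCoeff S = N →
      PowerSeries.constantCoeff T = N →
      S = T) ∧
    (∀ S : PowerSeries (Matrix (Fin n) (Fin n) ℂ),
      Polynomial.aeval S q * psderiv S = Polynomial.aeval S p →
      PowerSeries.constantCoeff S = N →
      ∀ m : ℕ, ∃ c : Polynomial ℂ,
        PowerSeries.coeff m S = Polynomial.aeval N c) :=
  stmt_11_general p q n N hN
end

section
/- Let p be a positive integer and let a ∈ ℂ((t)) be a nonzero formal Laurent series such that every exponent occurring in the support of a^p is divisible by p (i.e., a^p lies in the image of ℂ((x)) under x ↦ t^p). Then there exists an integer r such that every exponent occurring in the support of a is congruent to r modulo p (i.e., a ∈ t^r·ℂ((t^p))). -/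
/-!
Let `ζ` be a primitive `p`-th root of unity and `σ` the automorphism `t ↦ ζ t` of `ℂ((t))`.
The hypothesis says exactly that `σ` fixes `a ^ p`, so `σ a / a` is a `p`-th root of unity in
the field `ℂ((t))`, hence a constant `ζ ^ k`. Comparing coefficients, `ζ ^ i = ζ ^ k` whenever
`a` has a nonzero coefficient at `t ^ i`, that is `i ≡ k [ZMOD p]`.
-/

open HahnSeries

namespace LaurentSeries

variable {R : Type*} [CommSemiring R]

/-- The substitution `t ↦ ζ t`. -/
noncomputable def rescale (ζ : Rˣ) : LaurentSeries R →+* LaurentSeries R where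
  toFun a := ⟨fun i => ((ζ ^ i : Rˣ) : R) * a.coeff i,
    a.isPWO_support.mono fun i hi => right_ne_zero_of_mul hi⟩
  map_zero' := by ext; simp
  map_add' a b := by ext; simp [mul_add]
  map_one' := by
    ext i
    by_cases hi : i = 0 <;> simp [coeff_one, hi]
  map_mul' a b := by
    ext n
    simp only [coeff_mul, Finset.mul_sum]
    refine Finset.sum_congr ?_ fun ij hij => ?_
    · ext ij
      simp [Finset.mem_antidiagonal, Units.mul_right_eq_zero]
    · rw [← (Finset.mem_antidiagonal.mp hij).2.2, zpow_add, Units.val_mul]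
      ring

@[simp]
theorem coeff_rescale (ζ : Rˣ) (a : LaurentSeries R) (i : ℤ) :
    (rescale ζ a).coeff i = ((ζ ^ i : Rˣ) : R) * a.coeff i := rfl

theorem rescale_eq_self_of_forall_dvd {ζ : Rˣ} {p : ℕ} (hζ : ζ ^ p = 1) {b : LaurentSeries R}
    (hb : ∀ i, b.coeff i ≠ 0 → (p : ℤ) ∣ i) : rescale ζ b = b := by
  ext i
  by_cases hi : b.coeff i = 0
  · simp [hi]
  · obtain ⟨m, rfl⟩ := hb i hi
    simp [zpow_mul, hζ]

variable {K : Type*} [Field K]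

theorem exists_rescale_eq_C_pow_mul {ζ : Kˣ} {p : ℕ} [NeZero p] (hζ : IsPrimitiveRoot ζ p)
    {a : LaurentSeries K} (ha : a ≠ 0) (hap : rescale ζ (a ^ p) = a ^ p) :
    ∃ k : ℕ, rescale ζ a = C (ζ ^ k : K) * a := by
  have hpow : (rescale ζ a * a⁻¹) ^ p = 1 := by
    rw [mul_pow, ← map_pow, hap, inv_pow, mul_inv_cancel₀ (pow_ne_zero p ha)]
  have hCζ : IsPrimitiveRoot (C (ζ : K) : LaurentSeries K) p :=
    (IsPrimitiveRoot.coe_units_iff.mpr hζ).map_of_injective C_injective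
  obtain ⟨k, -, hk⟩ := hCζ.eq_pow_of_pow_eq_one hpow
  exact ⟨k, by rw [map_pow, hk, inv_mul_cancel_right₀ ha]⟩

theorem exists_forall_dvd_sub_of_forall_dvd_pow {ζ : Kˣ} {p : ℕ} [NeZero p]
    (hζ : IsPrimitiveRoot ζ p) {a : LaurentSeries K} (ha : a ≠ 0)
    (hap : ∀ i, (a ^ p).coeff i ≠ 0 → (p : ℤ) ∣ i) :
    ∃ r : ℤ, ∀ i, a.coeff i ≠ 0 → (p : ℤ) ∣ i - r := by
  obtain ⟨k, hk⟩ := exists_rescale_eq_C_pow_mul hζ ha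
    (rescale_eq_self_of_forall_dvd hζ.pow_eq_one hap)
  refine ⟨k, fun i hi => (hζ.zpow_eq_one_iff_dvd _).mp ?_⟩
  have hcoeff : ((ζ ^ i : Kˣ) : K) * a.coeff i = ((ζ ^ (k : ℤ) : Kˣ) : K) * a.coeff i := by
    simpa [C_apply, coeff_single_zero_mul] using congrArg (coeff · i) hk
  rw [zpow_sub, Units.ext (mul_right_cancel₀ hi hcoeff), mul_inv_cancel]

end LaurentSeries

/-- if `a` is a nonzero formal Laurent series such that all
exponents in the support of `a^p` are divisible by `p`, then all exponents in
the support of `a` are congruent to a single residue `r` modulo `p`. -/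
theorem stmt_15 (p : ℕ) (hp : 0 < p) (a : LaurentSeries ℂ) (ha : a ≠ 0)
    (hap : ∀ i : ℤ, (a ^ p).coeff i ≠ 0 → (p : ℤ) ∣ i) :
    ∃ r : ℤ, ∀ i : ℤ, a.coeff i ≠ 0 → (p : ℤ) ∣ (i - r) := by
  have : NeZero p := ⟨hp.ne'⟩
  exact LaurentSeries.exists_forall_dvd_sub_of_forall_dvd_pow
    ((Complex.isPrimitiveRoot_exp p hp.ne').isUnit_unit hp.ne') ha hap
end

section
/- Let F ∈ ℂ((x)) be a Laurent series with ord F = 0, with constant coefficient α, and with nonzero coefficient of x. Then f(F) is a square in ℂ((x)) if and only if f(α) ≠ 0. -/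
/-!
Write `F = α + x·u` with `u` a unit power series. If `f = (s - α)^m g` with `g(α) ≠ 0`, then
`f(F) = x^m u^m g(F)` and `g(F)` is a unit power series, so `ord f(F) = m`; square-freeness gives
`m ≤ 1`. Over `ℂ` a Laurent series is a square exactly when its order is even: the `x`-power is
then a square, and a power series with nonzero constant term has a square root by Hensel's lemma
(`ℂ⟦x⟧` is `x`-adically complete).
-/

namespace PowerSeries

theorem isSquare_of_sq_eq_constantCoeff {R : Type*} [CommRing R] {φ : PowerSeries R} {c : R}
    (hc : c ^ 2 = constantCoeff φ) (h2c : IsUnit (2 * c)) : IsSquare φ := by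
  -- Hensel's lemma for `T² - φ` at the approximate root `C c`.
  have hder : ((Polynomial.X ^ 2 - Polynomial.C φ).derivative).eval (C c) = C (2 * c) := by
    simp [two_mul, add_mul]
  obtain ⟨ψ, hroot, -⟩ := HenselianRing.is_henselian (I := Ideal.span {X})
    (Polynomial.X ^ 2 - Polynomial.C φ) (Polynomial.monic_X_pow_sub_C φ two_ne_zero) (C c)
    (by simp [Ideal.mem_span_singleton, X_dvd_iff, ← hc])
    (by rw [hder]; exact (isUnit_iff_constantCoeff.mpr (by simpa using h2c)).map _)
  exact ⟨ψ, by simpa [sub_eq_zero, sq, eq_comm] using hroot⟩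

theorem constantCoeff_aeval {R : Type*} [CommSemiring R] (φ : PowerSeries R) (p : Polynomial R) :
    constantCoeff (Polynomial.aeval φ p) = p.eval (constantCoeff φ) := by
  simp [Polynomial.aeval_eq_sum_range, Polynomial.eval_eq_sum_range]

end PowerSeries

open scoped LaurentSeries PowerSeries

namespace LaurentSeries

theorem order_ofPowerSeries_X_pow_mul {R : Type*} [Semiring R] (m : ℕ) {U : R⟦X⟧}
    (hU : PowerSeries.constantCoeff U ≠ 0) :
    (HahnSeries.ofPowerSeries ℤ R (PowerSeries.X ^ m * U)).order = m := by
  have hm : (HahnSeries.ofPowerSeries ℤ R (PowerSeries.X ^ m * U)).coeff m ≠ 0 := by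
    rwa [coeff_coe_powerSeries, PowerSeries.coeff_X_pow_mul', if_pos le_rfl, Nat.sub_self,
      PowerSeries.coeff_zero_eq_constantCoeff]
  refine le_antisymm (HahnSeries.order_le_of_coeff_ne_zero hm)
    ((HahnSeries.le_order_iff_forall (HahnSeries.ne_zero_of_coeff_ne_zero hm)).mpr fun j hj => ?_)
  rw [PowerSeries.coeff_coe, PowerSeries.coeff_X_pow_mul']
  split_ifs <;> first | rfl | omega

theorem aeval_ofPowerSeries {R : Type*} [CommSemiring R] (P : R⟦X⟧) (p : Polynomial R) :
    Polynomial.aeval (HahnSeries.ofPowerSeries ℤ R P) p =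
      HahnSeries.ofPowerSeries ℤ R (Polynomial.aeval P p) := by
  -- `Polynomial.aeval_algHom_apply` does not apply: `ofPowerSeriesAlg` is an algebra map for
  -- `HahnSeries.instAlgebra`, while `aeval` uses `HahnSeries.powerSeriesAlgebra`; the two agree
  -- only after unfolding.
  rw [Polynomial.aeval_def, Polynomial.aeval_def, Polynomial.hom_eval₂]
  rfl

theorem order_aeval_eq_rootMultiplicity {R : Type*} [CommRing R] [IsDomain R] {F : R⸨X⸩}
    (hord : F.order = 0) (hlin : F.coeff 1 ≠ 0) {f : Polynomial R} (hf : f ≠ 0) :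
    (Polynomial.aeval F f).order = f.rootMultiplicity (F.coeff 0) := by
  set a := F.coeff 0
  set P := F.powerSeriesPart
  have hF : F = HahnSeries.ofPowerSeries ℤ R P := by
    simpa [hord] using F.ofPowerSeries_powerSeriesPart.symm
  have hPa : PowerSeries.constantCoeff P = a := by
    simp [P, a, ← PowerSeries.coeff_zero_eq_constantCoeff, hord]
  obtain ⟨W, hW⟩ : PowerSeries.X ∣ P - PowerSeries.C a :=
    PowerSeries.X_dvd_iff.mpr (by simp [hPa])
  have hW0 : PowerSeries.constantCoeff W = F.coeff 1 := by
    simpa [P, hord, PowerSeries.coeff_C] using (congrArg (PowerSeries.coeff 1) hW).symm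
  obtain ⟨g, hfg, hg⟩ := f.exists_eq_pow_rootMultiplicity_mul_and_not_dvd hf a
  have hga : g.eval a ≠ 0 := by rwa [Polynomial.dvd_iff_isRoot] at hg
  set m := f.rootMultiplicity a
  have hfP : Polynomial.aeval P f = PowerSeries.X ^ m * (W ^ m * Polynomial.aeval P g) := by
    rw [hfg, map_mul, map_pow, map_sub, Polynomial.aeval_X, Polynomial.aeval_C,
      PowerSeries.algebraMap_apply, Algebra.algebraMap_self_apply, hW, mul_pow, mul_assoc]
  rw [hF, aeval_ofPowerSeries, hfP, order_ofPowerSeries_X_pow_mul]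
  simp [PowerSeries.constantCoeff_aeval, hPa, hW0, hlin, hga]

theorem even_order_of_isSquare {R : Type*} [Ring R] [NoZeroDivisors R] {G : R⸨X⸩}
    (hG : IsSquare G) : Even G.order := by
  obtain ⟨H, rfl⟩ := hG
  rw [← sq, HahnSeries.order_pow, two_nsmul]
  exact ⟨_, rfl⟩

theorem isSquare_of_even_order {K : Type*} [Field K] [IsAlgClosed K] [NeZero (2 : K)]
    {G : K⸨X⸩} (hG : Even G.order) : IsSquare G := by
  obtain rfl | hG0 := eq_or_ne G 0
  · exact ⟨0, by simp⟩
  obtain ⟨k, hk⟩ := hG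
  obtain ⟨c, hc⟩ := IsAlgClosed.exists_pow_nat_eq
    (PowerSeries.constantCoeff G.powerSeriesPart) two_pos
  have hc0 : c ≠ 0 := by
    rintro rfl
    refine hG0 (HahnSeries.coeff_order_eq_zero.mp ?_)
    simpa [← PowerSeries.coeff_zero_eq_constantCoeff] using hc.symm
  rw [← G.single_order_mul_powerSeriesPart, hk, ← one_mul (1 : K), ← HahnSeries.single_mul_single]
  exact (IsSquare.mul ⟨HahnSeries.single k 1, rfl⟩
    ((PowerSeries.isSquare_of_sq_eq_constantCoeff hc (mul_ne_zero two_ne_zero hc0).isUnit).map _))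

theorem isSquare_iff_even_order {K : Type*} [Field K] [IsAlgClosed K] [NeZero (2 : K)]
    (G : K⸨X⸩) : IsSquare G ↔ Even G.order :=
  ⟨even_order_of_isSquare, isSquare_of_even_order⟩

end LaurentSeries

theorem Polynomial.rootMultiplicity_le_one_of_squarefree {K : Type*} [Field K] [PerfectField K]
    {f : Polynomial K} (hf : Squarefree f) (a : K) : f.rootMultiplicity a ≤ 1 :=
  rootMultiplicity_le_one_of_separable (PerfectField.separable_iff_squarefree.mpr hf) a

theorem stmt_18_general (f : Polynomial ℂ) (hf : Squarefree f)
    (α : ℂ) (F : LaurentSeries ℂ) (hord : F.order = 0)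
    (hconst : F.coeff 0 = α) (hlin : F.coeff 1 ≠ 0) :
    (∃ G : LaurentSeries ℂ, Polynomial.aeval F f = G ^ 2) ↔ Polynomial.eval α f ≠ 0 := by
  have hmult := f.rootMultiplicity_le_one_of_squarefree hf α
  rw [← isSquare_iff_exists_sq, LaurentSeries.isSquare_iff_even_order,
    LaurentSeries.order_aeval_eq_rootMultiplicity hord hlin hf.ne_zero, hconst, Int.even_coe_nat,
    Nat.even_iff, show f.rootMultiplicity α % 2 = 0 ↔ f.rootMultiplicity α = 0 by omega,
    Polynomial.rootMultiplicity_eq_zero_iff]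
  simp [hf.ne_zero]

/-- for a square-free polynomial `f` of degree `≥ 3` and a Laurent
series `F` of order `0` with constant coefficient `α` and nonzero coefficient of
`x`, `f(F)` is a square in `ℂ((x))` iff `f(α) ≠ 0`. -/
theorem stmt_18 (f : Polynomial ℂ) (hf : Squarefree f) (hdeg : 3 ≤ f.natDegree)
    (α : ℂ) (F : LaurentSeries ℂ) (hF : F ≠ 0) (hord : F.order = 0)
    (hconst : F.coeff 0 = α) (hlin : F.coeff 1 ≠ 0) :
    (∃ G : LaurentSeries ℂ, Polynomial.aeval F f = G ^ 2) ↔ Polynomial.eval α f ≠ 0 :=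
  stmt_18_general f hf α F hord hconst hlin
end
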